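/- Let $\Theta, \Theta^{old}, E \in \mathbb{R}^{d\times p}$ and let $A \in \mathbb{R}^{d\times k}$ have orthonormal columns ($A^\top A = I_k$). Define $\Theta^{new} = \Theta^{old} + A A^\top E$. If $\|\Theta - \Theta^{old} - E\|_F < \tfrac{1}{2}\|A^\top E\|_F$, then $\|\Theta - \Theta^{new}\|_F < \|\Theta - \Theta^{old}\|_F$. -/

import Mathlib

/-!
With `R = Θ - Θold` and `u = A Aᵀ E`: since `A Aᵀ` is an orthogonal projection, `E - u ⟂ u` and
`‖u‖_F = ‖Aᵀ E‖_F`, hence `‖R - u‖² = ‖R‖² - ‖u‖² - 2⟪R - E, u⟫`, and Cauchy–Schwarz bounds the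
last term by `2‖R - E‖‖u‖ < ‖u‖²`. The Frobenius norm is the Euclidean norm of the vectorised
matrix, which puts the argument in an inner product space.
-/

open Matrix

/-- Frobenius norm of a real matrix. -/
noncomputable def frobNorm {d p : ℕ} (M : Matrix (Fin d) (Fin p) ℝ) : ℝ :=
  Real.sqrt (∑ i, ∑ j, (M i j) ^ 2)

open scoped RealInnerProductSpace

section InnerProductSpace

variable {V : Type*} [NormedAddCommGroup V] [InnerProductSpace ℝ V]

theorem norm_sub_sq_eq_of_inner_sub_self_eq_zero {r e u : V} (h : ⟪e - u, u⟫ = 0) :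
    ‖r - u‖ ^ 2 = ‖r‖ ^ 2 - ‖u‖ ^ 2 - 2 * ⟪r - e, u⟫ := by
  have hsplit : ⟪r, u⟫ = ⟪r - e, u⟫ + ⟪e - u, u⟫ + ‖u‖ ^ 2 := by
    rw [inner_sub_left, inner_sub_left, real_inner_self_eq_norm_sq]; ring
  rw [norm_sub_sq_real, hsplit, h]; ring

theorem norm_sub_lt_of_inner_sub_self_eq_zero {r e u : V} (h : ⟪e - u, u⟫ = 0)
    (hr : ‖r - e‖ < ‖u‖ / 2) : ‖r - u‖ < ‖r‖ := by
  have hcs : -(‖r - e‖ * ‖u‖) ≤ ⟪r - e, u⟫ := neg_le_of_abs_le (abs_real_inner_le_norm _ _)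
  have hu : 0 < ‖u‖ := by linarith [norm_nonneg (r - e)]
  have hsq : ‖r - u‖ ^ 2 < ‖r‖ ^ 2 := by
    rw [norm_sub_sq_eq_of_inner_sub_self_eq_zero h]; nlinarith
  exact lt_of_pow_lt_pow_left₀ 2 (norm_nonneg _) hsq

end InnerProductSpace

namespace Matrix

noncomputable def toEuclideanVec {m n : Type*} (M : Matrix m n ℝ) : EuclideanSpace ℝ (n × m) :=
  WithLp.toLp 2 M.vec

theorem toEuclideanVec_sub {m n : Type*} (X Y : Matrix m n ℝ) :
    (X - Y).toEuclideanVec = X.toEuclideanVec - Y.toEuclideanVec := by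
  simp [toEuclideanVec, vec_sub]

variable {m n l : Type*} [Fintype m] [Fintype l] [DecidableEq l]

theorem inner_toEuclideanVec [Fintype n] (X Y : Matrix m n ℝ) :
    ⟪X.toEuclideanVec, Y.toEuclideanVec⟫ = (Xᵀ * Y).trace := by
  rw [← vec_dotProduct_vec]
  simp [toEuclideanVec, EuclideanSpace.inner_eq_star_dotProduct, dotProduct_comm]

theorem norm_toEuclideanVec_mul_of_transpose_mul_self [Fintype n] {A : Matrix m l ℝ}
    (hA : Aᵀ * A = 1) (B : Matrix l n ℝ) : ‖(A * B).toEuclideanVec‖ = ‖B.toEuclideanVec‖ := by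
  rw [norm_eq_sqrt_real_inner, norm_eq_sqrt_real_inner, inner_toEuclideanVec,
    inner_toEuclideanVec, transpose_mul, Matrix.mul_assoc, ← Matrix.mul_assoc Aᵀ, hA,
    Matrix.one_mul]

theorem transpose_sub_proj_mul_eq_zero {A : Matrix m l ℝ} (hA : Aᵀ * A = 1)
    (E : Matrix m n ℝ) : (E - A * Aᵀ * E)ᵀ * A = 0 := by
  rw [transpose_sub, Matrix.sub_mul, transpose_mul, transpose_mul, transpose_transpose,
    Matrix.mul_assoc, Matrix.mul_assoc, hA, Matrix.mul_one, sub_self]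

theorem inner_toEuclideanVec_sub_proj_proj [Fintype n] {A : Matrix m l ℝ} (hA : Aᵀ * A = 1)
    (E : Matrix m n ℝ) :
    ⟪(E - A * Aᵀ * E).toEuclideanVec, (A * Aᵀ * E).toEuclideanVec⟫ = 0 := by
  have hperp := transpose_sub_proj_mul_eq_zero hA E
  rw [Matrix.mul_assoc A] at hperp ⊢
  rw [inner_toEuclideanVec, ← Matrix.mul_assoc _ A, hperp, Matrix.zero_mul, trace_zero]

end Matrix

theorem frobNorm_eq_norm_toEuclideanVec {d p : ℕ} (M : Matrix (Fin d) (Fin p) ℝ) :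
    frobNorm M = ‖M.toEuclideanVec‖ := by
  rw [frobNorm, EuclideanSpace.norm_eq, Fintype.sum_prod_type, Finset.sum_comm]
  simp [toEuclideanVec, vec]

/-- Rank-update improvement: if the surrogate error `E` is accurate enough, the updated
reduced solution `Θold + A Aᵀ E` is strictly closer to `Θ` than `Θold`. -/
theorem rank_update_improvement {d p k : ℕ}
    (Θ Θold E : Matrix (Fin d) (Fin p) ℝ) (A : Matrix (Fin d) (Fin k) ℝ)
    (hA : Aᵀ * A = 1)
    (Θnew : Matrix (Fin d) (Fin p) ℝ) (hnew : Θnew = Θold + A * Aᵀ * E)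
    (h : frobNorm (Θ - Θold - E) < (1 / 2) * frobNorm (Aᵀ * E)) :
    frobNorm (Θ - Θnew) < frobNorm (Θ - Θold) := by
  have hstep : Θ - Θnew = (Θ - Θold) - A * (Aᵀ * E) := by
    rw [hnew, sub_add_eq_sub_sub, Matrix.mul_assoc]
  rw [frobNorm_eq_norm_toEuclideanVec, frobNorm_eq_norm_toEuclideanVec, toEuclideanVec_sub,
    ← norm_toEuclideanVec_mul_of_transpose_mul_self hA] at h
  rw [hstep, frobNorm_eq_norm_toEuclideanVec, frobNorm_eq_norm_toEuclideanVec,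
    toEuclideanVec_sub]
  refine norm_sub_lt_of_inner_sub_self_eq_zero (e := E.toEuclideanVec) ?_ (by linarith)
  rw [← toEuclideanVec_sub, ← Matrix.mul_assoc]
  exact inner_toEuclideanVec_sub_proj_proj hA E
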